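/- Let p ∈ (0,1), let w₀ ∈ ℂ with w₀ ≠ 0, let f ∈ Σ*(p,w₀) with associated function P holomorphic on 𝔻, and let ω be the Schwarz function with P = (1 + ω)/(1 − ω), with ω(z) = c₁ z + c₂ z² + ⋯. Then 1 + p² − 2 c₁ p ≠ 0 and a₂(f) = 1/p + p (c₁² − c₂ + p² − 2 c₁ p)/(1 + p² − 2 c₁ p). -/

import Mathlib

/-! Near `0` the defining relation of `Σ*(p, w₀)` reads
`z f'(z) + (f(z) - w₀) (P(z) + r(z)) = 0` with `r(z) = p/(z - p) - p z/(1 - p z)`, which is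
holomorphic at `0` with `r⁽ⁿ⁾(0) = -n! (p⁻ⁿ + pⁿ)` for `n ≥ 1`. Differentiating once and twice
at `0`, using `f(0) = 0`, `f'(0) = 1` and `P'(0) = 2c₁`, `P''(0) = 4c₂ + 4c₁²` (from
`P (1 - ω) = 1 + ω`), gives `w₀ (2c₁ - 1/p - p) = 1`, which forces `1 + p² - 2c₁p ≠ 0`, and a
linear equation for `f''(0)` whose solution is the formula for `a₂(f)`. -/

open Complex Metric Set

/-- The second Taylor coefficient `a₂(f) = f''(0)/2`. -/
noncomputable def a2 (f : ℂ → ℂ) : ℂ := iteratedDeriv 2 f 0 / 2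

/-- `f` belongs to the class `Σ*(p, w₀)` with associated holomorphic function `P`:
`f` is holomorphic on the unit disc except for a simple pole at `p`, `f 0 = 0`,
`f' 0 = 1`, `f` omits `w₀`, and
`P z = -z f'(z)/(f z - w₀) - p/(z - p) + p z/(1 - p z)` extends holomorphically
to the unit disc with `P 0 = 1` and `Re (P z) > 0` there. -/
def SigmaStarWith (p : ℝ) (w₀ : ℂ) (f P : ℂ → ℂ) : Prop :=
  (∃ g : ℂ → ℂ, DifferentiableOn ℂ g (ball (0 : ℂ) 1) ∧ g p ≠ 0 ∧
      ∀ z ∈ ball (0 : ℂ) 1, z ≠ (p : ℂ) → f z = g z / (z - p)) ∧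
  f 0 = 0 ∧ deriv f 0 = 1 ∧
  (∀ z ∈ ball (0 : ℂ) 1, z ≠ (p : ℂ) → f z ≠ w₀) ∧
  DifferentiableOn ℂ P (ball (0 : ℂ) 1) ∧ P 0 = 1 ∧
  (∀ z ∈ ball (0 : ℂ) 1, 0 < (P z).re) ∧
  (∀ z ∈ ball (0 : ℂ) 1, z ≠ (p : ℂ) →
    P z = -z * deriv f z / (f z - w₀) - p / (z - p) + p * z / (1 - p * z))

/-- `f` belongs to the class `Σ*(p, w₀)`. -/
def SigmaStar (p : ℝ) (w₀ : ℂ) (f : ℂ → ℂ) : Prop :=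
  ∃ P : ℂ → ℂ, SigmaStarWith p w₀ f P

/-- `ω` is the Schwarz function associated to `P`, i.e. a holomorphic self-map of
the unit disc fixing `0` with `P = (1 + ω)/(1 - ω)`. -/
def SchwarzOf (P ω : ℂ → ℂ) : Prop :=
  DifferentiableOn ℂ ω (ball (0 : ℂ) 1) ∧
  MapsTo ω (ball (0 : ℂ) 1) (ball (0 : ℂ) 1) ∧ ω 0 = 0 ∧
  ∀ z ∈ ball (0 : ℂ) 1, P z = (1 + ω z) / (1 - ω z)

open Filter Topology
open scoped Nat

section
variable {𝕜 : Type*} [NontriviallyNormedField 𝕜]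

theorem iteratedDeriv_two_eq_deriv_deriv (f : 𝕜 → 𝕜) (x : 𝕜) :
    iteratedDeriv 2 f x = deriv (deriv f) x := by
  rw [iteratedDeriv_succ, iteratedDeriv_one]

theorem iteratedDeriv_two_sub_const (f : 𝕜 → 𝕜) (c x : 𝕜) :
    iteratedDeriv 2 (fun z => f z - c) x = iteratedDeriv 2 f x := by
  simp only [iteratedDeriv_two_eq_deriv_deriv, deriv_sub_const_fun]

theorem iteratedDeriv_two_fun_mul {f g : 𝕜 → 𝕜} {x : 𝕜} (hf : ContDiffAt 𝕜 2 f x)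
    (hg : ContDiffAt 𝕜 2 g x) :
    iteratedDeriv 2 (fun z => f z * g z) x =
      iteratedDeriv 2 f x * g x + 2 * deriv f x * deriv g x + f x * iteratedDeriv 2 g x := by
  simp only [iteratedDeriv_fun_mul hf hg, Finset.sum_range_succ, Finset.range_one,
    Finset.sum_singleton, Nat.choose_zero_right, Nat.choose_succ_self_right, Nat.choose_self,
    Nat.cast_one, Nat.cast_ofNat, iteratedDeriv_zero, iteratedDeriv_one, Nat.reduceAdd, tsub_zero,
    Nat.add_one_sub_one, tsub_self, one_mul]
  ring

theorem iteratedDeriv_inv_linear (n : ℕ) (c d x : 𝕜) :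
    iteratedDeriv n (fun z => (c * z + d)⁻¹) x =
      (-1) ^ n * n ! * c ^ n * (c * x + d) ^ (-1 - n : ℤ) := by
  rw [iteratedDeriv_eq_iterate, iter_deriv_inv_linear]

/-- The rational part of the function `P` attached to `f ∈ Σ*(p, w₀)`:
`P z = -z f'(z) / (f z - w₀) - poleCorrection p z`. -/
def poleCorrection (p z : 𝕜) : 𝕜 := p / (z - p) - p * z / (1 - p * z)

-- The right-hand side is written in the shape of `iter_deriv_inv_linear`.
theorem poleCorrection_eventuallyEq {p : 𝕜} (hp : p ≠ 0) :
    poleCorrection p =ᶠ[𝓝 0] fun z => 1 + p * (1 * z + -p)⁻¹ - (-p * z + 1)⁻¹ := by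
  have h : ∀ᶠ z in 𝓝 (0 : 𝕜), z - p ≠ 0 ∧ 1 - p * z ≠ 0 :=
    (ContinuousAt.eventually_ne (by fun_prop) (by simpa using hp)).and
      (ContinuousAt.eventually_ne (by fun_prop) (by simp))
  filter_upwards [h] with z ⟨h₁, h₂⟩
  rw [poleCorrection, one_mul, ← sub_eq_add_neg, neg_mul, neg_add_eq_sub]
  field_simp
  ring

theorem poleCorrection_zero {p : 𝕜} (hp : p ≠ 0) : poleCorrection p 0 = -1 := by
  simp [poleCorrection, hp]

theorem analyticAt_poleCorrection_zero {p : 𝕜} (hp : p ≠ 0) :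
    AnalyticAt 𝕜 (poleCorrection p) 0 := by
  unfold poleCorrection
  fun_prop (disch := simp [hp])

theorem iteratedDeriv_poleCorrection_zero {p : 𝕜} (hp : p ≠ 0) {n : ℕ} (hn : n ≠ 0) :
    iteratedDeriv n (poleCorrection p) 0 = -n ! * (p⁻¹ ^ n + p ^ n) := by
  rw [(poleCorrection_eventuallyEq hp).iteratedDeriv_eq, iteratedDeriv_fun_sub
    (by fun_prop (disch := simpa)) (by fun_prop (disch := simp)),
    iteratedDeriv_const_add (Nat.pos_of_ne_zero hn), iteratedDeriv_const_mul_field,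
    iteratedDeriv_inv_linear, iteratedDeriv_inv_linear]
  have h : (-1 - n : ℤ) = -((n + 1 : ℕ) : ℤ) := by push_cast; ring
  simp only [mul_zero, zero_add, one_pow, mul_one, h, zpow_neg, zpow_natCast, neg_pow p,
    pow_succ, inv_pow]
  rcases neg_one_pow_eq_or 𝕜 n with hs | hs <;> rw [hs] <;> field_simp <;> ring

theorem deriv_poleCorrection_zero {p : 𝕜} (hp : p ≠ 0) :
    deriv (poleCorrection p) 0 = -(p⁻¹ + p) := by
  simpa using iteratedDeriv_poleCorrection_zero hp one_ne_zero

variable [CompleteSpace 𝕜]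

theorem derivs_zero_of_eventually_eq_cayley {P ω : 𝕜 → 𝕜} (hω : AnalyticAt 𝕜 ω 0)
    (hω₀ : ω 0 = 0) (hP : ∀ᶠ z in 𝓝 0, P z = (1 + ω z) / (1 - ω z)) :
    deriv P 0 = 2 * deriv ω 0 ∧
      iteratedDeriv 2 P 0 = 2 * iteratedDeriv 2 ω 0 + 4 * deriv ω 0 ^ 2 := by
  have hne : ∀ᶠ z in 𝓝 0, 1 - ω z ≠ 0 :=
    ContinuousAt.eventually_ne (by fun_prop) (by simp [hω₀])
  have hPa : AnalyticAt 𝕜 P 0 :=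
    ((analyticAt_const.add hω).div (analyticAt_const.sub hω) (by simp [hω₀])).congr
      (hP.mono fun _ h => h.symm)
  have hmul : (fun z => P z * (1 - ω z)) =ᶠ[𝓝 0] fun z => 1 + ω z := by
    filter_upwards [hP, hne] with z hz hz'
    rw [hz, div_mul_cancel₀ _ hz']
  have hP₀ : P 0 = 1 := by simpa [hω₀] using hmul.eq_of_nhds
  have hω₁ : DifferentiableAt 𝕜 ω 0 := hω.differentiableAt
  have hω₂ : ContDiffAt 𝕜 2 ω 0 := hω.contDiffAt
  have hP₁ : deriv P 0 = 2 * deriv ω 0 := by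
    have := hmul.deriv_eq
    rw [deriv_fun_mul hPa.differentiableAt (by fun_prop)] at this
    simp only [hω₀, hP₀, sub_zero, mul_one, one_mul, mul_neg, deriv_const_sub',
      deriv_const_add'] at this
    linear_combination this
  refine ⟨hP₁, ?_⟩
  have := (hmul.iteratedDeriv 2).eq_of_nhds
  rw [iteratedDeriv_two_fun_mul hPa.contDiffAt (by fun_prop),
    iteratedDeriv_const_sub two_pos, iteratedDeriv_const_add two_pos, iteratedDeriv_neg,
    hP₁] at this
  simp only [hω₀, hP₀, sub_zero, mul_one, one_mul, mul_neg,
    deriv_const_sub'] at this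
  linear_combination this

theorem derivs_zero_of_eventually_mul_deriv_add_mul_eq_zero {F Q : 𝕜 → 𝕜} {w : 𝕜}
    (hF : AnalyticAt 𝕜 F 0) (hQ : AnalyticAt 𝕜 Q 0)
    (h : ∀ᶠ z in 𝓝 0, z * deriv F z + (F z - w) * Q z = 0) :
    (1 + Q 0) * deriv F 0 + (F 0 - w) * deriv Q 0 = 0 ∧
      (2 + Q 0) * iteratedDeriv 2 F 0 + 2 * deriv F 0 * deriv Q 0 +
        (F 0 - w) * iteratedDeriv 2 Q 0 = 0 := by
  have h' : (fun z => z * deriv F z + (F z - w) * Q z) =ᶠ[𝓝 0] fun _ => 0 := h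
  have hF₁ : DifferentiableAt 𝕜 F 0 := hF.differentiableAt
  have hF'₁ : DifferentiableAt 𝕜 (deriv F) 0 := hF.deriv.differentiableAt
  have hQ₁ : DifferentiableAt 𝕜 Q 0 := hQ.differentiableAt
  have hF₂ : ContDiffAt 𝕜 2 F 0 := hF.contDiffAt
  have hF'₂ : ContDiffAt 𝕜 2 (deriv F) 0 := hF.deriv.contDiffAt
  have hQ₂ : ContDiffAt 𝕜 2 Q 0 := hQ.contDiffAt
  constructor
  · have := h'.deriv_eq
    rw [deriv_fun_add (by fun_prop) (by fun_prop), deriv_fun_mul (by fun_prop) (by fun_prop),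
      deriv_fun_mul (by fun_prop) (by fun_prop)] at this
    simp only [deriv_id'', deriv_sub_const_fun, deriv_const', one_mul, zero_mul, add_zero] at this
    linear_combination this
  · have := (h'.iteratedDeriv 2).eq_of_nhds
    rw [iteratedDeriv_fun_add (by fun_prop) (by fun_prop),
      iteratedDeriv_two_fun_mul (by fun_prop) hF'₂, iteratedDeriv_two_fun_mul (by fun_prop) hQ₂,
      iteratedDeriv_fun_id_zero, iteratedDeriv_two_sub_const,
      ← iteratedDeriv_two_eq_deriv_deriv] at this
    simp only [OfNat.ofNat_ne_one, ↓reduceIte, deriv_id'', deriv_sub_const_fun,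
      iteratedDeriv_fun_const_zero, zero_mul, mul_one, zero_add, add_zero] at this
    linear_combination this

end

theorem div_two_eq_of_coeff_relations {K : Type*} [Field K] [CharZero K] {p c₁ c₂ w a : K}
    (hp : p ≠ 0) (h₁ : 1 - w * (2 * c₁ - (p⁻¹ + p)) = 0)
    (h₂ : 2 * a + 2 * (2 * c₁ - (p⁻¹ + p)) -
      w * (2 * c₂ + 4 * c₁ ^ 2 - 2 * (p⁻¹ ^ 2 + p ^ 2)) = 0) :
    1 + p ^ 2 - 2 * c₁ * p ≠ 0 ∧
      a / 2 = 1 / p + p * (c₁ ^ 2 - c₂ / 2 + p ^ 2 - 2 * c₁ * p) / (1 + p ^ 2 - 2 * c₁ * p) := by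
  have hw : w * (1 + p ^ 2 - 2 * c₁ * p) = -p := by
    field_simp at h₁
    linear_combination h₁
  have hD : 1 + p ^ 2 - 2 * c₁ * p ≠ 0 := by
    intro h
    rw [h, mul_zero] at hw
    exact hp (neg_eq_zero.mp hw.symm)
  refine ⟨hD, ?_⟩
  rw [div_add_div _ _ hp hD, eq_div_iff (mul_ne_zero hp hD)]
  linear_combination (norm := skip) (p * (1 + p ^ 2 - 2 * c₁ * p) / 4) * h₂ +
    (p / 4) * (2 * c₂ + 4 * c₁ ^ 2 - 2 * (p⁻¹ ^ 2 + p ^ 2)) * hw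
  field_simp
  ring

namespace SigmaStarWith
variable {p : ℝ} {w₀ : ℂ} {f P : ℂ → ℂ}

theorem analyticAt_zero (hp : p ≠ 0) (hf : SigmaStarWith p w₀ f P) : AnalyticAt ℂ f 0 := by
  obtain ⟨⟨g, hg, -, hfg⟩, -⟩ := hf
  have hp' : (p : ℂ) ≠ 0 := by exact_mod_cast hp
  have hfg' : (fun z => g z / (z - p)) =ᶠ[𝓝 0] f := by
    filter_upwards [ball_mem_nhds 0 one_pos, eventually_ne_nhds hp'.symm] with z hz hzp
    exact (hfg z hz hzp).symm
  exact ((hg.analyticAt (ball_mem_nhds 0 one_pos)).div (by fun_prop) (by simpa using hp')).congr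
    hfg'

theorem eventually_mul_deriv_add_mul_eq_zero (hp : p ≠ 0) (hf : SigmaStarWith p w₀ f P) :
    ∀ᶠ z in 𝓝 0, z * deriv f z + (f z - w₀) * (P z + poleCorrection (p : ℂ) z) = 0 := by
  obtain ⟨-, -, -, hfw, -, -, -, hPf⟩ := hf
  have hp' : (p : ℂ) ≠ 0 := by exact_mod_cast hp
  have h1pz : ∀ᶠ z in 𝓝 (0 : ℂ), 1 - (p : ℂ) * z ≠ 0 :=
    ContinuousAt.eventually_ne (by fun_prop) (by simp)
  filter_upwards [ball_mem_nhds 0 one_pos, eventually_ne_nhds hp'.symm, h1pz] with z hz hzp hpz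
  have hzp' : z - p ≠ 0 := sub_ne_zero.mpr hzp
  have hfz : f z - w₀ ≠ 0 := sub_ne_zero.mpr (hfw z hz hzp)
  rw [hPf z hz hzp, poleCorrection]
  field_simp
  ring

end SigmaStarWith

theorem stmt_7_general (p : ℝ) (hp : 0 < p ∧ p < 1)
    (w₀ : ℂ) (f P ω : ℂ → ℂ) (hf : SigmaStarWith p w₀ f P) (hω : SchwarzOf P ω) :
    1 + (p : ℂ) ^ 2 - 2 * deriv ω 0 * p ≠ 0 ∧
    a2 f = 1 / p + (p : ℂ) *
      ((deriv ω 0) ^ 2 - iteratedDeriv 2 ω 0 / 2 + (p : ℂ) ^ 2 - 2 * deriv ω 0 * p) /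
        (1 + (p : ℂ) ^ 2 - 2 * deriv ω 0 * p) := by
  have hp₀ : (p : ℂ) ≠ 0 := by exact_mod_cast hp.1.ne'
  have hball : ball (0 : ℂ) 1 ∈ 𝓝 0 := ball_mem_nhds 0 one_pos
  have hpole := analyticAt_poleCorrection_zero hp₀
  have ⟨_, hf₀, hf'₀, _, hPd, hP₀, _⟩ := hf
  obtain ⟨hωd, -, hω₀, hPω⟩ := hω
  have hPa : AnalyticAt ℂ P 0 := hPd.analyticAt hball
  obtain ⟨h₁, h₂⟩ := derivs_zero_of_eventually_mul_deriv_add_mul_eq_zero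
    (Q := fun z => P z + poleCorrection (p : ℂ) z) (hf.analyticAt_zero hp.1.ne')
    (hPa.add hpole) (hf.eventually_mul_deriv_add_mul_eq_zero hp.1.ne')
  obtain ⟨hP₁, hP₂⟩ := derivs_zero_of_eventually_eq_cayley (hωd.analyticAt hball) hω₀
    (eventually_of_mem hball hPω)
  rw [iteratedDeriv_fun_add hPa.contDiffAt hpole.contDiffAt,
    iteratedDeriv_poleCorrection_zero hp₀ two_ne_zero, Nat.factorial_two, hP₂] at h₂
  rw [deriv_fun_add hPa.differentiableAt hpole.differentiableAt, deriv_poleCorrection_zero hp₀,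
    poleCorrection_zero hp₀, hf₀, hf'₀, hP₀, hP₁] at h₁ h₂
  refine div_two_eq_of_coeff_relations (w := w₀) hp₀ ?_ ?_
  · linear_combination h₁
  · linear_combination h₂

theorem stmt_7 (p : ℝ) (hp : 0 < p ∧ p < 1) (w₀ : ℂ) (hw : w₀ ≠ 0)
    (f P ω : ℂ → ℂ) (hf : SigmaStarWith p w₀ f P) (hω : SchwarzOf P ω) :
    1 + (p : ℂ) ^ 2 - 2 * deriv ω 0 * p ≠ 0 ∧
    a2 f = 1 / p + (p : ℂ) *
      ((deriv ω 0) ^ 2 - iteratedDeriv 2 ω 0 / 2 + (p : ℂ) ^ 2 - 2 * deriv ω 0 * p) /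
        (1 + (p : ℂ) ^ 2 - 2 * deriv ω 0 * p) :=
  stmt_7_general p hp w₀ f P ω hf hω
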